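/- arXiv:2605.26859 — 2 statements merged into one kernel-verified Lean document; each statement's English description precedes it below -/
import Mathlib

section
/- A bigraph B is an almost proper interval bigraph if and only if B is a 𝓤^±-bigraph. -/
lemma nonempty_icc_icc {a b c d : ℝ} (hab : a ≤ b) (hcd : c ≤ d) :
    (Set.Icc a b ∩ Set.Icc c d).Nonempty ↔ c ≤ b ∧ a ≤ d := by
  constructor
  · rintro ⟨x, ⟨h1, h2⟩, ⟨h3, h4⟩⟩
    exact ⟨le_trans h3 h2, le_trans h1 h4⟩
  · rintro ⟨h1, h2⟩
    exact ⟨max a c, ⟨le_max_left _ _, max_le hab h1⟩, ⟨le_max_right _ _, max_le h2 hcd⟩⟩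

lemma nonempty_icc_ioo {a b c d : ℝ} (hab : a < b) (hcd : c < d) :
    (Set.Icc a b ∩ Set.Ioo c d).Nonempty ↔ c < b ∧ a < d := by
  constructor
  · rintro ⟨x, ⟨h1, h2⟩, ⟨h3, h4⟩⟩
    exact ⟨lt_of_lt_of_le h3 h2, lt_of_le_of_lt h1 h4⟩
  · rintro ⟨h1, h2⟩
    have hm : max a c < min b d := by
      rcases max_cases a c with ⟨h, _⟩ | ⟨h, _⟩ <;> rcases min_cases b d with ⟨h', _⟩ | ⟨h', _⟩ <;>
        rw [h, h'] <;> linarith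
    have e1 := le_max_left a c; have e2 := le_max_right a c
    have e3 := min_le_left b d; have e4 := min_le_right b d
    refine ⟨(max a c + min b d) / 2, ⟨by linarith, by linarith⟩, by linarith, by linarith⟩

lemma nonempty_ioo_ioo {a b c d : ℝ} (hab : a < b) (hcd : c < d) :
    (Set.Ioo a b ∩ Set.Ioo c d).Nonempty ↔ c < b ∧ a < d := by
  constructor
  · rintro ⟨x, ⟨h1, h2⟩, ⟨h3, h4⟩⟩
    exact ⟨lt_trans h3 h2, lt_trans h1 h4⟩
  · rintro ⟨h1, h2⟩
    have hm : max a c < min b d := by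
      rcases max_cases a c with ⟨h, _⟩ | ⟨h, _⟩ <;> rcases min_cases b d with ⟨h', _⟩ | ⟨h', _⟩ <;>
        rw [h, h'] <;> linarith
    have e1 := le_max_left a c; have e2 := le_max_right a c
    have e3 := min_le_left b d; have e4 := min_le_right b d
    refine ⟨(max a c + min b d) / 2, ⟨by linarith, by linarith⟩, by linarith, by linarith⟩

lemma icc_ne_ioo {a b c d : ℝ} (hab : a ≤ b) (hcd : c < d) : Set.Icc a b ≠ Set.Ioo c d := by
  intro h
  have ha : a ∈ Set.Ioo c d := h ▸ Set.left_mem_Icc.mpr hab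
  have h2 : (c + a) / 2 ∈ Set.Icc a b := by
    rw [h]; exact ⟨by linarith [ha.1], by linarith [ha.1, ha.2]⟩
  linarith [h2.1, ha.1]

lemma icc_inj {a b c d : ℝ} (hab : a ≤ b) (hcd : c ≤ d) (h : Set.Icc a b = Set.Icc c d) :
    a = c ∧ b = d := by
  have h1 : Set.Icc a b ⊆ Set.Icc c d := h.le
  have h2 : Set.Icc c d ⊆ Set.Icc a b := h.ge
  rw [Set.Icc_subset_Icc_iff hab] at h1
  rw [Set.Icc_subset_Icc_iff hcd] at h2
  exact ⟨le_antisymm h2.1 h1.1, le_antisymm h1.2 h2.2⟩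

lemma ioo_inj {a b c d : ℝ} (hab : a < b) (hcd : c < d) (h : Set.Ioo a b = Set.Ioo c d) :
    a = c ∧ b = d := by
  have h1 : Set.Ioo a b ⊆ Set.Ioo c d := h.le
  have h2 : Set.Ioo c d ⊆ Set.Ioo a b := h.ge
  rw [Set.Ioo_subset_Ioo_iff hab] at h1
  rw [Set.Ioo_subset_Ioo_iff hcd] at h2
  exact ⟨le_antisymm h2.1 h1.1, le_antisymm h1.2 h2.2⟩

lemma exists_eps (S : Finset ℝ) :
    ∃ ε : ℝ, 0 < ε ∧ ε ≤ 1/4 ∧ ∀ d ∈ S, (d < 1 → d ≤ 1 - 2*ε) ∧ (0 < d → ε < d) := by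
  classical
  set F : ℝ → ℝ := fun d => min (if d < 1 then (1-d)/2 else 1) (if 0 < d then d/2 else 1)
    with hF
  set T : Finset ℝ := insert (1/4 : ℝ) (S.image F) with hT
  have hTne : T.Nonempty := ⟨1/4, Finset.mem_insert_self _ _⟩
  have hTpos : ∀ y ∈ T, 0 < y := by
    intro y hy
    rcases Finset.mem_insert.mp hy with h | h
    · rw [h]; norm_num
    · obtain ⟨d, _, hd⟩ := Finset.mem_image.mp h
      rw [← hd, hF]
      apply lt_min <;> split <;> norm_num <;> linarith
  have hpos : 0 < T.min' hTne := hTpos _ (T.min'_mem hTne)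
  refine ⟨T.min' hTne, hpos, Finset.min'_le _ _ (Finset.mem_insert_self _ _), ?_⟩
  intro d hd
  have hle : T.min' hTne ≤ F d :=
    Finset.min'_le _ _ (Finset.mem_insert_of_mem (Finset.mem_image_of_mem F hd))
  constructor
  · intro h1
    have : F d ≤ (1-d)/2 := by rw [hF]; simp only [if_pos h1]; exact min_le_left _ _
    linarith
  · intro h0
    have h2 : F d ≤ d/2 := by rw [hF]; simp only [if_pos h0]; exact min_le_right _ _
    linarith


lemma exists_assign (P : Finset (ℝ × ℝ))
    (h1 : ∀ p ∈ P, p.1 < p.2)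
    (h2 : ∀ p ∈ P, ∀ q ∈ P, p.1 ≤ q.1 → q.2 ≤ p.2 → p = q) :
    ∃ x : ℝ × ℝ → ℝ, ∀ p ∈ P, ∀ q ∈ P, p.1 ≤ q.1 →
      x p ≤ x q ∧ (p.1 < q.1 → x p < x q) ∧
      (q.1 ≤ p.2 ↔ x q ≤ x p + 1) ∧ (q.1 < p.2 ↔ x q < x p + 1) := by
  classical
  induction P using Finset.strongInduction with
  | _ P IH =>
  -- general facts
  have hfst : ∀ p ∈ P, ∀ q ∈ P, p.1 = q.1 → p = q := by
    intro p hp q hq h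
    rcases le_total p.2 q.2 with h' | h'
    · exact (h2 q hq p hp h.ge h').symm
    · exact h2 p hp q hq h.le h'
  have hpar : ∀ p ∈ P, ∀ q ∈ P, p.1 < q.1 → p.2 < q.2 := by
    intro p hp q hq h
    by_contra hc
    push_neg at hc
    exact absurd (h2 p hp q hq h.le hc) (fun he => lt_irrefl _ (he ▸ h))
  rcases P.eq_empty_or_nonempty with rfl | hne
  · exact ⟨fun _ => 0, by simp⟩
  obtain ⟨m, hm, hmax⟩ := P.exists_max_image Prod.fst hne
  set P' := P.erase m with hP'
  have hsub : P' ⊂ P := Finset.erase_ssubset hm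
  have hmemP : ∀ j ∈ P', j ∈ P := fun j hj => Finset.mem_of_mem_erase hj
  obtain ⟨x, hx⟩ := IH P' hsub (fun p hp => h1 p (hmemP p hp))
    (fun p hp q hq h h' => h2 p (hmemP p hp) q (hmemP q hq) h h')
  have hlt : ∀ j ∈ P', j.1 < m.1 := by
    intro j hj
    have hne' : j ≠ m := Finset.ne_of_mem_erase hj
    rcases lt_or_eq_of_le (hmax j (hmemP j hj)) with h | h
    · exact h
    · exact absurd (hfst j (hmemP j hj) m hm h) hne'
  suffices hsuff : ∃ v : ℝ, (∀ j ∈ P', x j < v) ∧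
      (∀ j ∈ P', (m.1 ≤ j.2 ↔ v ≤ x j + 1) ∧ (m.1 < j.2 ↔ v < x j + 1)) by
    obtain ⟨v, hv1, hv2⟩ := hsuff
    refine ⟨fun p => if p = m then v else x p, ?_⟩
    intro p hp q hq hle
    by_cases hpm : p = m <;> by_cases hqm : q = m
    · rw [hpm, hqm]
      simp only [if_pos rfl]
      refine ⟨le_refl _, fun h => absurd h (lt_irrefl _), ?_, ?_⟩ <;>
        constructor <;> intro _ <;> linarith [h1 m hm]
    · -- p = m, q ≠ m : impossible since q.1 < m.1 ≤ q.1
      subst hpm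
      have hq' : q ∈ P' := Finset.mem_erase.mpr ⟨hqm, hq⟩
      exact absurd hle (not_le.mpr (hlt q hq'))
    · subst hqm
      have hp' : p ∈ P' := Finset.mem_erase.mpr ⟨hpm, hp⟩
      simp only [if_pos rfl, if_neg hpm]
      refine ⟨(hv1 p hp').le, fun _ => hv1 p hp', (hv2 p hp').1, (hv2 p hp').2⟩
    · have hp' : p ∈ P' := Finset.mem_erase.mpr ⟨hpm, hp⟩
      have hq' : q ∈ P' := Finset.mem_erase.mpr ⟨hqm, hq⟩
      simp only [if_neg hpm, if_neg hqm]
      exact hx p hp' q hq' hle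
  -- now construct the new value
  rcases P'.eq_empty_or_nonempty with hP'e | hne'
  · exact ⟨0, by simp [hP'e], by simp [hP'e]⟩
  by_cases hforce : ∃ i ∈ P', i.2 = m.1
  · obtain ⟨i, hi, hieq⟩ := hforce
    refine ⟨x i + 1, ?_, ?_⟩
    · intro j hj
      rcases le_or_gt i.1 j.1 with h | h
      · have := (hx i hi j hj h).2.2.2
        exact this.mp (hieq ▸ hlt j hj)
      · have := (hx j hj i hi h.le).2.1 h
        linarith
    · intro j hj
      rw [← hieq]
      rcases eq_or_ne i j with rfl | hij
      · simp
      · rcases lt_trichotomy i.1 j.1 with h | h | h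
        · have hii := hpar i (hmemP i hi) j (hmemP j hj) h
          have hxx := (hx i hi j hj h.le).2.1 h
          constructor <;> constructor <;> intro <;> linarith
        · exact absurd (hfst i (hmemP i hi) j (hmemP j hj) h) hij
        · have hii := hpar j (hmemP j hj) i (hmemP i hi) h
          have hxx := (hx j hj i hi h.le).2.1 h
          constructor <;> constructor <;> intro <;> linarith
  -- no forced value
  push_neg at hforce
  set U := P'.filter (fun j => m.1 < j.2) with hU
  set Dn := P'.filter (fun j => j.2 < m.1) with hDn
  have hUD : ∀ j ∈ P', j ∈ U ∨ j ∈ Dn := by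
    intro j hj
    rcases lt_trichotomy m.1 j.2 with h | h | h
    · exact Or.inl (Finset.mem_filter.mpr ⟨hj, h⟩)
    · exact absurd h.symm (hforce j hj)
    · exact Or.inr (Finset.mem_filter.mpr ⟨hj, h⟩)
  set T : Finset ℝ := P'.image x ∪ Dn.image (fun j => x j + 1) with hT
  have hTne : T.Nonempty := by
    obtain ⟨j, hj⟩ := hne'
    exact ⟨x j, Finset.mem_union_left _ (Finset.mem_image_of_mem x hj)⟩
  set B := T.max' hTne with hB
  have hBx : ∀ j ∈ P', x j ≤ B :=
    fun j hj => Finset.le_max' _ _ (Finset.mem_union_left _ (Finset.mem_image_of_mem x hj))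
  have hBD : ∀ j ∈ Dn, x j + 1 ≤ B := fun j hj =>
    Finset.le_max' T (x j + 1)
      (Finset.mem_union_right _ (Finset.mem_image_of_mem (fun j => x j + 1) hj))
  by_cases hUne : U.Nonempty
  · obtain ⟨j₀, hj₀U, hj₀min⟩ := U.exists_min_image Prod.fst hUne
    have hj₀P' : j₀ ∈ P' := (Finset.mem_filter.mp hj₀U).1
    have hj₀2 : m.1 < j₀.2 := (Finset.mem_filter.mp hj₀U).2
    have hBlt : B < x j₀ + 1 := by
      have hBmem : B ∈ P'.image x ∪ Dn.image (fun j => x j + 1) := T.max'_mem hTne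
      rcases Finset.mem_union.mp hBmem with h | h
      · obtain ⟨j, hj, hjeq⟩ := Finset.mem_image.mp h
        rw [← hjeq]
        rcases le_or_gt j₀.1 j.1 with hh | hh
        · exact (hx j₀ hj₀P' j hj hh).2.2.2.mp (lt_trans (hlt j hj) hj₀2)
        · linarith [(hx j hj j₀ hj₀P' hh.le).2.1 hh]
      · obtain ⟨i, hiD, hieq⟩ := Finset.mem_image.mp h
        rw [← hieq]
        have hiP' : i ∈ P' := (Finset.mem_filter.mp hiD).1
        have hi2 : i.2 < m.1 := (Finset.mem_filter.mp hiD).2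
        have hii : i.1 < j₀.1 := by
          by_contra hc
          push_neg at hc
          have := h2 j₀ (hmemP j₀ hj₀P') i (hmemP i hiP') hc (by linarith)
          rw [this] at hj₀2
          linarith
        linarith [(hx i hiP' j₀ hj₀P' hii.le).2.1 hii]
    refine ⟨(B + (x j₀ + 1)) / 2, ?_, ?_⟩
    · intro j hj
      linarith [hBx j hj]
    · intro j hj
      rcases hUD j hj with hjU | hjD
      · have hj2 : m.1 < j.2 := (Finset.mem_filter.mp hjU).2
        have hxj : x j₀ ≤ x j := (hx j₀ hj₀P' j (Finset.mem_filter.mp hjU).1 (hj₀min j hjU)).1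
        exact ⟨iff_of_true hj2.le (by linarith), iff_of_true hj2 (by linarith)⟩
      · have hj2 : j.2 < m.1 := (Finset.mem_filter.mp hjD).2
        have := hBD j hjD
        exact ⟨iff_of_false (by linarith) (by linarith), iff_of_false (by linarith) (by linarith)⟩
  · refine ⟨B + 1, ?_, ?_⟩
    · intro j hj; linarith [hBx j hj]
    · intro j hj
      rcases hUD j hj with hjU | hjD
      · exact absurd ⟨j, hjU⟩ hUne
      · have hj2 : j.2 < m.1 := (Finset.mem_filter.mp hjD).2
        have := hBD j hjD
        exact ⟨iff_of_false (by linarith) (by linarith), iff_of_false (by linarith) (by linarith)⟩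

/-- `𝓘⁺⁺`: the family of bounded closed intervals `[a, b]` with `a < b`. -/
def IccFam : Set (Set ℝ) := {s | ∃ a b : ℝ, a < b ∧ s = Set.Icc a b}

/-- `𝓘⁻⁻`: the family of bounded open intervals `(a, b)` with `a < b`. -/
def IooFam : Set (Set ℝ) := {s | ∃ a b : ℝ, a < b ∧ s = Set.Ioo a b}

/-- `𝓤⁺⁺`: the family of closed unit intervals `[a, a+1]`. -/
def UnitCC : Set (Set ℝ) := {s | ∃ a : ℝ, s = Set.Icc a (a + 1)}

/-- `𝓤⁻⁻`: the family of open unit intervals `(a, a+1)`. -/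
def UnitOO : Set (Set ℝ) := {s | ∃ a : ℝ, s = Set.Ioo a (a + 1)}

/-- A bigraph `B = (X, Y, E)` is an `M`-bigraph if it admits an `M`-intersection
representation. -/
def IsMBigraph (M : Set (Set ℝ)) {X Y : Type} (E : X → Y → Prop) : Prop :=
  ∃ f : X ⊕ Y → Set ℝ, (∀ v, f v ∈ M) ∧
    ∀ x y, E x y ↔ (f (Sum.inl x) ∩ f (Sum.inr y)).Nonempty

/-- `B` is an almost proper interval bigraph: it has an `𝓘^±`-intersection
representation in which (i) no closed interval is properly contained in another
closed interval of the representation and (ii) for every vertex whose interval is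
an open interval `(a, b)` there is a vertex whose interval is the closed interval
`[a, b]` with the same endpoints. -/
def IsAlmostProperIntervalBigraph {X Y : Type} (E : X → Y → Prop) : Prop :=
  ∃ f : X ⊕ Y → Set ℝ,
    (∀ v, f v ∈ IccFam ∪ IooFam) ∧
    (∀ x y, E x y ↔ (f (Sum.inl x) ∩ f (Sum.inr y)).Nonempty) ∧
    (∀ u v : X ⊕ Y, f u ∈ IccFam → f v ∈ IccFam → ¬ f u ⊂ f v) ∧
    (∀ (u : X ⊕ Y) (a b : ℝ), a < b → f u = Set.Ioo a b →
      ∃ v : X ⊕ Y, f v = Set.Icc a b)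


/-- A bigraph is an almost proper interval bigraph iff it is a `𝓤^±`-bigraph. -/
theorem almostProper_iff_UPM_bigraph {X Y : Type} [Fintype X] [Fintype Y]
    (E : X → Y → Prop) :
    IsAlmostProperIntervalBigraph E ↔ IsMBigraph (UnitCC ∪ UnitOO) E := by
  classical
  constructor
  · rintro ⟨f, hmem, hE, hproper, htwin⟩
    have hdata : ∀ v : X ⊕ Y, ∃ a b : ℝ, a < b ∧ (f v = Set.Icc a b ∨ f v = Set.Ioo a b) := by
      intro v
      rcases hmem v with ⟨a, b, hab, hfe⟩ | ⟨a, b, hab, hfe⟩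
      · exact ⟨a, b, hab, Or.inl hfe⟩
      · exact ⟨a, b, hab, Or.inr hfe⟩
    choose l r hlr hf using hdata
    set Pset : Finset (ℝ × ℝ) :=
      (Finset.univ.filter (fun v : X ⊕ Y => f v = Set.Icc (l v) (r v))).image
        (fun v => (l v, r v)) with hPset
    have hP1 : ∀ p ∈ Pset, p.1 < p.2 := by
      intro p hp
      obtain ⟨v, _, hv⟩ := Finset.mem_image.mp hp
      rw [← hv]; exact hlr v
    have hP2 : ∀ p ∈ Pset, ∀ q ∈ Pset, p.1 ≤ q.1 → q.2 ≤ p.2 → p = q := by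
      intro p hp q hq hle1 hle2
      obtain ⟨u, hu', hu⟩ := Finset.mem_image.mp hp
      obtain ⟨v, hv', hv⟩ := Finset.mem_image.mp hq
      have hfu : f u = Set.Icc (l u) (r u) := (Finset.mem_filter.mp hu').2
      have hfv : f v = Set.Icc (l v) (r v) := (Finset.mem_filter.mp hv').2
      subst hu; subst hv
      dsimp only at hle1 hle2 ⊢
      have hsub2 : Set.Icc (l v) (r v) ⊆ Set.Icc (l u) (r u) :=
        (Set.Icc_subset_Icc_iff (hlr v).le).mpr ⟨hle1, hle2⟩
      have hnp := hproper v u ⟨l v, r v, hlr v, hfv⟩ ⟨l u, r u, hlr u, hfu⟩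
      rw [hfu, hfv] at hnp
      have heq : Set.Icc (l v) (r v) = Set.Icc (l u) (r u) := by
        by_contra hne
        exact hnp (ssubset_iff_subset_ne.mpr ⟨hsub2, hne⟩)
      obtain ⟨h1e, h2e⟩ := icc_inj (hlr v).le (hlr u).le heq
      rw [h1e, h2e]
    obtain ⟨x, hx⟩ := exists_assign Pset hP1 hP2
    have hPmem : ∀ v : X ⊕ Y, (l v, r v) ∈ Pset := by
      intro v
      rcases hf v with hfv | hfv
      · exact Finset.mem_image.mpr ⟨v, Finset.mem_filter.mpr ⟨Finset.mem_univ v, hfv⟩, rfl⟩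
      · obtain ⟨w, hw⟩ := htwin v (l v) (r v) (hlr v) hfv
        rcases hf w with hfw | hfw
        · have heq : Set.Icc (l w) (r w) = Set.Icc (l v) (r v) := by rw [← hfw, hw]
          obtain ⟨h1e, h2e⟩ := icc_inj (hlr w).le (hlr v).le heq
          exact Finset.mem_image.mpr ⟨w, Finset.mem_filter.mpr ⟨Finset.mem_univ w, hfw⟩,
            by rw [h1e, h2e]⟩
        · exact absurd (hw.symm.trans hfw) (icc_ne_ioo (hlr v).le (hlr w))
    set g : X ⊕ Y → ℝ := fun v => x (l v, r v) with hg
    set F : X ⊕ Y → Set ℝ := fun v =>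
      if f v = Set.Icc (l v) (r v) then Set.Icc (g v) (g v + 1) else Set.Ioo (g v) (g v + 1)
      with hFdef
    have hco : ∀ u v : X ⊕ Y, l u ≤ l v → ((f u ∩ f v).Nonempty ↔ (F u ∩ F v).Nonempty) := by
      intro u v hle
      have hinv := hx (l u, r u) (hPmem u) (l v, r v) (hPmem v) hle
      dsimp only at hinv
      obtain ⟨hmono, _, hiff1, hiff2⟩ := hinv
      have hgu : g u ≤ g u + 1 := by linarith
      have hgv : g v ≤ g v + 1 := by linarith
      have hgu' : g u < g u + 1 := by linarith
      have hgv' : g v < g v + 1 := by linarith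
      by_cases hu : f u = Set.Icc (l u) (r u) <;> by_cases hv : f v = Set.Icc (l v) (r v)
      · rw [hu, hv]
        simp only [hFdef, if_pos hu, if_pos hv]
        rw [nonempty_icc_icc (hlr u).le (hlr v).le, nonempty_icc_icc hgu hgv]
        constructor
        · rintro ⟨hA, _⟩; exact ⟨hiff1.mp hA, by linarith⟩
        · rintro ⟨hA, _⟩; exact ⟨hiff1.mpr hA, by linarith [hlr v]⟩
      · have hv' : f v = Set.Ioo (l v) (r v) := (hf v).resolve_left hv
        rw [hu, hv']
        simp only [hFdef, if_pos hu, if_neg hv]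
        rw [nonempty_icc_ioo (hlr u) (hlr v), nonempty_icc_ioo hgu' hgv']
        constructor
        · rintro ⟨hA, _⟩; exact ⟨hiff2.mp hA, by linarith⟩
        · rintro ⟨hA, _⟩; exact ⟨hiff2.mpr hA, by linarith [hlr v]⟩
      · have hu' : f u = Set.Ioo (l u) (r u) := (hf u).resolve_left hu
        rw [hu', hv, Set.inter_comm]
        simp only [hFdef, if_neg hu, if_pos hv]
        rw [Set.inter_comm (Set.Ioo (g u) (g u + 1))]
        rw [nonempty_icc_ioo (hlr v) (hlr u), nonempty_icc_ioo hgv' hgu']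
        constructor
        · rintro ⟨hA, hB⟩; exact ⟨by linarith, hiff2.mp hB⟩
        · rintro ⟨hA, hB⟩; exact ⟨by linarith [hlr v], hiff2.mpr hB⟩
      · have hu' : f u = Set.Ioo (l u) (r u) := (hf u).resolve_left hu
        have hv' : f v = Set.Ioo (l v) (r v) := (hf v).resolve_left hv
        rw [hu', hv']
        simp only [hFdef, if_neg hu, if_neg hv]
        rw [nonempty_ioo_ioo (hlr u) (hlr v), nonempty_ioo_ioo hgu' hgv']
        constructor
        · rintro ⟨hA, _⟩; exact ⟨hiff2.mp hA, by linarith⟩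
        · rintro ⟨hA, _⟩; exact ⟨hiff2.mpr hA, by linarith [hlr v]⟩
    refine ⟨F, ?_, ?_⟩
    · intro v
      by_cases hv : f v = Set.Icc (l v) (r v)
      · exact Or.inl ⟨g v, by simp only [hFdef, if_pos hv]⟩
      · exact Or.inr ⟨g v, by simp only [hFdef, if_neg hv]⟩
    · intro p q
      rw [hE p q]
      rcases le_total (l (Sum.inl p)) (l (Sum.inr q)) with h | h
      · exact hco _ _ h
      · rw [Set.inter_comm, Set.inter_comm (F (Sum.inl p))]
        exact hco _ _ h
  · rintro ⟨f, hmem, hE⟩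
    have hdata : ∀ v : X ⊕ Y, ∃ a : ℝ, f v = Set.Icc a (a+1) ∨ f v = Set.Ioo a (a+1) := by
      intro v
      rcases hmem v with ⟨a, hfe⟩ | ⟨a, hfe⟩
      · exact ⟨a, Or.inl hfe⟩
      · exact ⟨a, Or.inr hfe⟩
    choose a hf using hdata
    set S : Finset ℝ :=
      (Finset.univ : Finset ((X ⊕ Y) × (X ⊕ Y))).image (fun p => |a p.1 - a p.2|) with hS
    obtain ⟨ε, hε0, hε4, hεS⟩ := exists_eps S
    have hdS : ∀ u v : X ⊕ Y, |a u - a v| ∈ S := fun u v =>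
      Finset.mem_image.mpr ⟨(u, v), Finset.mem_univ _, rfl⟩
    set F : X ⊕ Y → Set ℝ := fun v =>
      if f v = Set.Icc (a v) (a v + 1) then Set.Icc (a v) (a v + 1)
      else if ∃ w, f w = Set.Icc (a v) (a v + 1) then Set.Ioo (a v) (a v + 1)
      else Set.Icc (a v + ε) (a v + 1 - ε) with hFdef
    have hFcases : ∀ v, (f v = Set.Icc (a v) (a v + 1) ∧ F v = Set.Icc (a v) (a v + 1)) ∨
        (f v = Set.Ioo (a v) (a v + 1) ∧ (∃ w, f w = Set.Icc (a v) (a v + 1)) ∧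
          F v = Set.Ioo (a v) (a v + 1)) ∨
        (f v = Set.Ioo (a v) (a v + 1) ∧ (¬ ∃ w, f w = Set.Icc (a v) (a v + 1)) ∧
          F v = Set.Icc (a v + ε) (a v + 1 - ε)) := by
      intro v
      by_cases h1 : f v = Set.Icc (a v) (a v + 1)
      · exact Or.inl ⟨h1, by simp only [hFdef, if_pos h1]⟩
      · have hIoo := (hf v).resolve_left h1
        by_cases h2 : ∃ w, f w = Set.Icc (a v) (a v + 1)
        · exact Or.inr (Or.inl ⟨hIoo, h2, by simp only [hFdef, if_neg h1, if_pos h2]⟩)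
        · exact Or.inr (Or.inr ⟨hIoo, h2, by simp only [hFdef, if_neg h1, if_neg h2]⟩)
    refine ⟨F, ?_, ?_, ?_, ?_⟩
    · intro v; rcases hFcases v with ⟨_, h⟩ | ⟨_, _, h⟩ | ⟨_, _, h⟩
      · exact Or.inl ⟨a v, a v + 1, by linarith, h⟩
      · exact Or.inr ⟨a v, a v + 1, by linarith, h⟩
      · exact Or.inl ⟨a v + ε, a v + 1 - ε, by linarith, h⟩
    · have hFsub : ∀ v, F v ⊆ f v := by
        intro v
        rcases hFcases v with ⟨h, h'⟩ | ⟨h, _, h'⟩ | ⟨h, _, h'⟩ <;> rw [h, h']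
        intro z hz
        exact ⟨by linarith [hz.1, hz.2], by linarith [hz.1, hz.2]⟩
      have hiff : ∀ u v : X ⊕ Y, (f u ∩ f v).Nonempty ↔ (F u ∩ F v).Nonempty := by
        intro u v
        constructor
        case mpr => exact fun h => h.mono (Set.inter_subset_inter (hFsub u) (hFsub v))
        intro hne
        rcases hFcases u with ⟨hu, hFu⟩ | ⟨hu, hu2, hFu⟩ | ⟨hu, hu2, hFu⟩ <;>
          rcases hFcases v with ⟨hv, hFv⟩ | ⟨hv, hv2, hFv⟩ | ⟨hv, hv2, hFv⟩
        -- (closed, closed)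
        · rw [hFu, hFv, ← hu, ← hv]; exact hne
        -- (closed, open)
        · rw [hu, hv, nonempty_icc_ioo (by linarith) (by linarith)] at hne
          have hd' := (hεS _ (hdS u v)).1 (abs_sub_lt_iff.mpr ⟨by linarith, by linarith⟩)
          obtain ⟨hA, hB⟩ := abs_sub_le_iff.mp hd'
          rw [hFu, hFv, nonempty_icc_ioo (by linarith) (by linarith)]
          constructor <;> linarith
        -- (closed, shrunk)
        · rw [hu, hv, nonempty_icc_ioo (by linarith) (by linarith)] at hne
          have hd' := (hεS _ (hdS u v)).1 (abs_sub_lt_iff.mpr ⟨by linarith, by linarith⟩)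
          obtain ⟨hA, hB⟩ := abs_sub_le_iff.mp hd'
          rw [hFu, hFv, nonempty_icc_icc (by linarith) (by linarith)]
          constructor <;> linarith
        -- (open, closed)
        · rw [hu, hv, Set.inter_comm, nonempty_icc_ioo (by linarith) (by linarith)] at hne
          have hd' := (hεS _ (hdS u v)).1 (abs_sub_lt_iff.mpr ⟨by linarith, by linarith⟩)
          obtain ⟨hA, hB⟩ := abs_sub_le_iff.mp hd'
          rw [hFu, hFv, Set.inter_comm, nonempty_icc_ioo (by linarith) (by linarith)]
          constructor <;> linarith
        -- (open, open)
        · rw [hu, hv, nonempty_ioo_ioo (by linarith) (by linarith)] at hne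
          have hd' := (hεS _ (hdS u v)).1 (abs_sub_lt_iff.mpr ⟨by linarith, by linarith⟩)
          obtain ⟨hA, hB⟩ := abs_sub_le_iff.mp hd'
          rw [hFu, hFv, nonempty_ioo_ioo (by linarith) (by linarith)]
          constructor <;> linarith
        -- (open, shrunk)
        · rw [hu, hv, nonempty_ioo_ioo (by linarith) (by linarith)] at hne
          have hd' := (hεS _ (hdS u v)).1 (abs_sub_lt_iff.mpr ⟨by linarith, by linarith⟩)
          obtain ⟨hA, hB⟩ := abs_sub_le_iff.mp hd'
          rw [hFu, hFv, Set.inter_comm, nonempty_icc_ioo (by linarith) (by linarith)]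
          constructor <;> linarith
        -- (shrunk, closed)
        · rw [hu, hv, Set.inter_comm, nonempty_icc_ioo (by linarith) (by linarith)] at hne
          have hd' := (hεS _ (hdS u v)).1 (abs_sub_lt_iff.mpr ⟨by linarith, by linarith⟩)
          obtain ⟨hA, hB⟩ := abs_sub_le_iff.mp hd'
          rw [hFu, hFv, nonempty_icc_icc (by linarith) (by linarith)]
          constructor <;> linarith
        -- (shrunk, open)
        · rw [hu, hv, nonempty_ioo_ioo (by linarith) (by linarith)] at hne
          have hd' := (hεS _ (hdS u v)).1 (abs_sub_lt_iff.mpr ⟨by linarith, by linarith⟩)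
          obtain ⟨hA, hB⟩ := abs_sub_le_iff.mp hd'
          rw [hFu, hFv, nonempty_icc_ioo (by linarith) (by linarith)]
          constructor <;> linarith
        -- (shrunk, shrunk)
        · rw [hu, hv, nonempty_ioo_ioo (by linarith) (by linarith)] at hne
          have hd' := (hεS _ (hdS u v)).1 (abs_sub_lt_iff.mpr ⟨by linarith, by linarith⟩)
          obtain ⟨hA, hB⟩ := abs_sub_le_iff.mp hd'
          rw [hFu, hFv, nonempty_icc_icc (by linarith) (by linarith)]
          constructor <;> linarith
      intro p q
      rw [hE p q]
      exact hiff _ _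
    · intro u v hu hv hss
      have hshape : ∀ w : X ⊕ Y, F w ∈ IccFam →
          (f w = Set.Icc (a w) (a w + 1) ∧ F w = Set.Icc (a w) (a w + 1)) ∨
          ((¬ ∃ w', f w' = Set.Icc (a w) (a w + 1)) ∧
            F w = Set.Icc (a w + ε) (a w + 1 - ε)) := by
        intro w hw
        rcases hFcases w with ⟨h, h'⟩ | ⟨_, _, h'⟩ | ⟨_, hno, h'⟩
        · exact Or.inl ⟨h, h'⟩
        · obtain ⟨c, d, hcd, hcd'⟩ := hw
          rw [h'] at hcd'
          exact absurd hcd'.symm (icc_ne_ioo hcd.le (by linarith))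
        · exact Or.inr ⟨hno, h'⟩
      have hsub := hss.subset
      rcases hshape u hu with ⟨hfu, h⟩ | ⟨hnou, h⟩ <;> rcases hshape v hv with ⟨hfv, h'⟩ | ⟨hnov, h'⟩
      · rw [h, h', Set.Icc_subset_Icc_iff (by linarith)] at hsub
        have haa : a u = a v := by linarith [hsub.1, hsub.2]
        exact hss.ne (by rw [h, h', haa])
      · rw [h, h', Set.Icc_subset_Icc_iff (by linarith)] at hsub
        linarith [hsub.1, hsub.2]
      · rw [h, h', Set.Icc_subset_Icc_iff (by linarith)] at hsub
        by_cases haa : a u = a v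
        · exact hnou ⟨v, by rw [hfv, haa]⟩
        · have hpos : 0 < |a u - a v| := abs_pos.mpr (sub_ne_zero.mpr haa)
          have hεd := (hεS _ (hdS u v)).2 hpos
          have : |a u - a v| ≤ ε := abs_sub_le_iff.mpr ⟨by linarith [hsub.1, hsub.2],
            by linarith [hsub.1, hsub.2]⟩
          linarith
      · rw [h, h', Set.Icc_subset_Icc_iff (by linarith)] at hsub
        have haa : a u = a v := by linarith [hsub.1, hsub.2]
        exact hss.ne (by rw [h, h', haa])
    · intro u aa bb haabb hFu
      rcases hFcases u with ⟨_, h⟩ | ⟨_, hu2, h⟩ | ⟨_, _, h⟩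
      · rw [h] at hFu; exact absurd hFu (icc_ne_ioo (by linarith) haabb)
      · rw [h] at hFu
        obtain ⟨h1e, h2e⟩ := ioo_inj (by linarith) haabb hFu
        obtain ⟨w, hw⟩ := hu2
        refine ⟨w, ?_⟩
        rcases hf w with hfw | hfw
        · have hww := icc_inj (by linarith : a w ≤ a w + 1) (by linarith : a u ≤ a u + 1)
            (hfw.symm.trans hw)
          have hFw : F w = Set.Icc (a w) (a w + 1) := by simp only [hFdef, if_pos hfw]
          rw [hFw, hww.1, h2e, h1e]
        · exact absurd (hw.symm.trans hfw) (icc_ne_ioo (by linarith) (by linarith))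
      · rw [h] at hFu; exact absurd hFu (icc_ne_ioo (by linarith) haabb)
end

section
/- The bipartite net H₂ is a 𝓤^±-bigraph but is not a 𝓤⁺⁺-bigraph (i.e., it is not a unit interval bigraph). -/
/-- `𝓤⁺⁻`: the family of closed-open unit intervals `[a, a+1)`. -/
def UnitCO : Set (Set ℝ) := {s | ∃ a : ℝ, s = Set.Ico a (a + 1)}

/-- `𝓤⁻⁺`: the family of open-closed unit intervals `(a, a+1]`. -/
def UnitOC : Set (Set ℝ) := {s | ∃ a : ℝ, s = Set.Ioc a (a + 1)}

/-- `𝓤`: all unit intervals of the four types. -/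
def UnitFam : Set (Set ℝ) := UnitCC ∪ UnitOO ∪ UnitCO ∪ UnitOC

/-- The bipartite net `H₂`: `X = {x₁, x₂, x₃}` (indices `0,1,2`),
`Y = {y₁, y₂, y₃, y₄}` (indices `0,1,2,3`), edges
`x₁y₁, x₂y₁, x₃y₁, x₂y₂, x₃y₃, x₂y₄, x₃y₄`. -/
def H2E : Fin 3 → Fin 4 → Prop := fun x y =>
  (x.val, y.val) ∈ ([(0, 0), (1, 0), (2, 0), (1, 1), (2, 2), (1, 3), (2, 3)] : List (ℕ × ℕ))

lemma icc_inter_icc (a b : ℝ) :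
    (Set.Icc a (a+1) ∩ Set.Icc b (b+1)).Nonempty ↔ |a - b| ≤ 1 := by
  constructor
  · rintro ⟨x, ⟨h1, h2⟩, h3, h4⟩
    rw [abs_le]; constructor <;> linarith
  · intro h
    rw [abs_le] at h
    exact ⟨max a b, ⟨le_max_left _ _, max_le_iff.mpr ⟨by linarith, by linarith⟩⟩,
      le_max_right _ _, max_le_iff.mpr ⟨by linarith, by linarith⟩⟩

/-- The bipartite net is a `𝓤^±`-bigraph but not a unit interval bigraph. -/
theorem bipartite_net_UPM_not_unit :
    IsMBigraph (UnitCC ∪ UnitOO) H2E ∧ ¬ IsMBigraph UnitCC H2E := by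
  constructor
  · -- representation: x₁ = (0,1), x₂ = [0,1], x₃ = [1,2],
    -- y₁ = [1/2, 3/2], y₂ = [-1,0], y₃ = [2,3], y₄ = [1,2]
    refine ⟨fun v => match v with
      | Sum.inl 0 => Set.Ioo 0 1
      | Sum.inl 1 => Set.Icc 0 1
      | Sum.inl 2 => Set.Icc 1 2
      | Sum.inr 0 => Set.Icc (1/2) (3/2)
      | Sum.inr 1 => Set.Icc (-1) 0
      | Sum.inr 2 => Set.Icc 2 3
      | Sum.inr 3 => Set.Icc 1 2, ?_, ?_⟩
    · rintro (x | y)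
      · fin_cases x
        · exact Or.inr ⟨0, by norm_num⟩
        · exact Or.inl ⟨0, by norm_num⟩
        · exact Or.inl ⟨1, by norm_num⟩
      · fin_cases y
        · exact Or.inl ⟨1/2, by norm_num⟩
        · exact Or.inl ⟨-1, by norm_num⟩
        · exact Or.inl ⟨2, by norm_num⟩
        · exact Or.inl ⟨1, by norm_num⟩
    · intro x y
      fin_cases x <;> fin_cases y
      · exact iff_of_true (by simp only [H2E]; decide) ⟨3/4, by constructor <;> constructor <;> norm_num⟩
      · exact iff_of_false (by simp only [H2E]; decide) (by rintro ⟨t, ⟨h1, h2⟩, h3, h4⟩; linarith)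
      · exact iff_of_false (by simp only [H2E]; decide) (by rintro ⟨t, ⟨h1, h2⟩, h3, h4⟩; linarith)
      · exact iff_of_false (by simp only [H2E]; decide) (by rintro ⟨t, ⟨h1, h2⟩, h3, h4⟩; linarith)
      · exact iff_of_true (by simp only [H2E]; decide) ⟨1, by constructor <;> constructor <;> norm_num⟩
      · exact iff_of_true (by simp only [H2E]; decide) ⟨0, by constructor <;> constructor <;> norm_num⟩
      · exact iff_of_false (by simp only [H2E]; decide) (by rintro ⟨t, ⟨h1, h2⟩, h3, h4⟩; linarith)
      · exact iff_of_true (by simp only [H2E]; decide) ⟨1, by constructor <;> constructor <;> norm_num⟩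
      · exact iff_of_true (by simp only [H2E]; decide) ⟨1, by constructor <;> constructor <;> norm_num⟩
      · exact iff_of_false (by simp only [H2E]; decide) (by rintro ⟨t, ⟨h1, h2⟩, h3, h4⟩; linarith)
      · exact iff_of_true (by simp only [H2E]; decide) ⟨2, by constructor <;> constructor <;> norm_num⟩
      · exact iff_of_true (by simp only [H2E]; decide) ⟨1, by constructor <;> constructor <;> norm_num⟩
  · rintro ⟨f, hmem, hE⟩
    obtain ⟨a1, ha1⟩ := hmem (Sum.inl 0)
    obtain ⟨a2, ha2⟩ := hmem (Sum.inl 1)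
    obtain ⟨a3, ha3⟩ := hmem (Sum.inl 2)
    obtain ⟨b1, hb1⟩ := hmem (Sum.inr 0)
    obtain ⟨b2, hb2⟩ := hmem (Sum.inr 1)
    obtain ⟨b3, hb3⟩ := hmem (Sum.inr 2)
    obtain ⟨b4, hb4⟩ := hmem (Sum.inr 3)
    have e11 := (hE 0 0).mp (by simp only [H2E]; decide); rw [ha1, hb1, icc_inter_icc] at e11
    have e21 := (hE 1 0).mp (by simp only [H2E]; decide); rw [ha2, hb1, icc_inter_icc] at e21
    have e31 := (hE 2 0).mp (by simp only [H2E]; decide); rw [ha3, hb1, icc_inter_icc] at e31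
    have e22 := (hE 1 1).mp (by simp only [H2E]; decide); rw [ha2, hb2, icc_inter_icc] at e22
    have e33 := (hE 2 2).mp (by simp only [H2E]; decide); rw [ha3, hb3, icc_inter_icc] at e33
    have e24 := (hE 1 3).mp (by simp only [H2E]; decide); rw [ha2, hb4, icc_inter_icc] at e24
    have e34 := (hE 2 3).mp (by simp only [H2E]; decide); rw [ha3, hb4, icc_inter_icc] at e34
    have n12 : ¬ (f (Sum.inl 0) ∩ f (Sum.inr 1)).Nonempty :=
      fun h => absurd ((hE 0 1).mpr h) (by simp only [H2E]; decide)
    have n13 : ¬ (f (Sum.inl 0) ∩ f (Sum.inr 2)).Nonempty :=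
      fun h => absurd ((hE 0 2).mpr h) (by simp only [H2E]; decide)
    have n14 : ¬ (f (Sum.inl 0) ∩ f (Sum.inr 3)).Nonempty :=
      fun h => absurd ((hE 0 3).mpr h) (by simp only [H2E]; decide)
    have n23 : ¬ (f (Sum.inl 1) ∩ f (Sum.inr 2)).Nonempty :=
      fun h => absurd ((hE 1 2).mpr h) (by simp only [H2E]; decide)
    have n32 : ¬ (f (Sum.inl 2) ∩ f (Sum.inr 1)).Nonempty :=
      fun h => absurd ((hE 2 1).mpr h) (by simp only [H2E]; decide)
    rw [ha1, hb2, icc_inter_icc, not_le, lt_abs] at n12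
    rw [ha1, hb3, icc_inter_icc, not_le, lt_abs] at n13
    rw [ha1, hb4, icc_inter_icc, not_le, lt_abs] at n14
    rw [ha2, hb3, icc_inter_icc, not_le, lt_abs] at n23
    rw [ha3, hb2, icc_inter_icc, not_le, lt_abs] at n32
    rw [abs_le] at e11 e21 e31 e22 e33 e24 e34
    obtain ⟨e11a, e11b⟩ := e11
    obtain ⟨e21a, e21b⟩ := e21
    obtain ⟨e31a, e31b⟩ := e31
    obtain ⟨e22a, e22b⟩ := e22
    obtain ⟨e33a, e33b⟩ := e33
    obtain ⟨e24a, e24b⟩ := e24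
    obtain ⟨e34a, e34b⟩ := e34
    rcases n12 with h12 | h12 <;> rcases n13 with h13 | h13 <;>
      rcases n14 with h14 | h14 <;> rcases n23 with h23 | h23 <;>
      rcases n32 with h32 | h32 <;> linarith
end
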